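/- arXiv:2210.03605 — 4 statements merged into one kernel-verified Lean document; each statement's English description precedes it below -/
import Mathlib

section
/- Let p, q ≥ 2 be integers. Let f : ℂ → ℂ be an entire function whose zero set f⁻¹(0) is infinite and all of whose zeros are simple, and let g : ℂ → ℂ be an entire function all of whose zeros are simple, such that A := g⁻¹(0) is a nonempty subset of f⁻¹(0) and A is either infinite or finite of even cardinality. Then the fiber product S(f,g) = {(z₁,z₂,z₃) ∈ ℂ³ : z₂^p = f(z₁) and z₃^q = g(z₁)} is a connected subset of ℂ³. -/
/-!
Fix a common zero `a` of `f` and `g`, so that `(a, 0, 0)` lies in `S(f,g)`. The zeros of `f` are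
simple, hence isolated, hence countable, so any `z₁ ≠ a` is joined to `a` by a curve whose
interior avoids them. Along that interior `f` and `g` have no zeros, so they admit continuous
`p`-th and `q`-th roots along the curve starting at any prescribed `z₂` and `z₃`; at the far end
both roots vanish. The lifted curve is a connected subset of `S(f,g)` containing `(z₁, z₂, z₃)`
and `(a, 0, 0)`.
-/

open Set

theorem continuousAt_of_pow_eq_of_eq_zero {X K : Type*} [TopologicalSpace X]
    [NormedDivisionRing K] {n : ℕ} (hn : n ≠ 0) {W φ : X → K} (hW : ∀ x, W x ^ n = φ x)
    {x : X} (hφ : ContinuousAt φ x) (hx : φ x = 0) : ContinuousAt W x := by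
  have hWx : W x = 0 := pow_eq_zero_iff hn |>.mp (by rw [hW, hx])
  rw [ContinuousAt, hx] at hφ
  rw [ContinuousAt, hWx, Metric.tendsto_nhds]
  intro ε hε
  filter_upwards [Metric.tendsto_nhds.mp hφ (ε ^ n) (by positivity)] with y hy
  rw [dist_zero_right] at hy ⊢
  rwa [← pow_lt_pow_iff_left₀ (norm_nonneg _) hε.le hn, ← norm_pow, hW]

theorem exists_continuous_pow_eq_of_isSimplyConnected {X : Type*} [TopologicalSpace X]
    [LocallyPathConnectedSpace X] {φ : X → ℂ} (hφ : Continuous φ)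
    (hU : IsSimplyConnected {x | φ x ≠ 0}) {n : ℕ} (hn : n ≠ 0) :
    ∃ W : X → ℂ, Continuous W ∧ ∀ x, W x ^ n = φ x := by
  have hUo : IsOpen {x | φ x ≠ 0} := isOpen_ne_fun hφ continuous_const
  obtain ⟨W, hWc, hW⟩ := Complex.exists_continuousOn_pow_eq hU hUo hφ.continuousOn
    (by simp) hn
  refine ⟨W, continuous_iff_continuousAt.mpr fun x => ?_, hW⟩
  by_cases hx : φ x = 0
  · exact continuousAt_of_pow_eq_of_eq_zero hn hW hφ.continuousAt hx
  · exact hWc.continuousAt (hUo.mem_nhds hx)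

theorem exists_continuous_pow_eq_and_apply_eq {X K : Type*} [TopologicalSpace X] [Field K]
    [TopologicalSpace K] [IsTopologicalRing K] {n : ℕ} (hn : n ≠ 0) {φ F : X → K}
    (hF : Continuous F) (hFφ : ∀ x, F x ^ n = φ x) {x₀ : X} {w : K} (hw : w ^ n = φ x₀) :
    ∃ W : X → K, Continuous W ∧ W x₀ = w ∧ ∀ x, W x ^ n = φ x := by
  by_cases hw0 : w = 0
  · refine ⟨F, hF, ?_, hFφ⟩
    rw [hw0, ← pow_eq_zero_iff hn, hFφ, ← hw, hw0, zero_pow hn]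
  have hF0 : F x₀ ≠ 0 := by
    rw [← pow_ne_zero_iff hn, hFφ, ← hw]
    exact pow_ne_zero n hw0
  refine ⟨fun x => w / F x₀ * F x, continuous_const.mul hF, div_mul_cancel₀ w hF0, fun x => ?_⟩
  rw [mul_pow, div_pow, hFφ, hFφ, ← hw, div_self (pow_ne_zero n hw0), one_mul]

theorem exists_continuous_pow_eq_of_ordConnected {φ : ℝ → ℂ} (hφ : Continuous φ)
    (hU : OrdConnected {t | φ t ≠ 0}) {n : ℕ} (hn : n ≠ 0) {t₀ : ℝ} {w : ℂ}
    (hw : w ^ n = φ t₀) : ∃ W : ℝ → ℂ, Continuous W ∧ W t₀ = w ∧ ∀ t, W t ^ n = φ t := by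
  obtain ⟨F, hF, hFφ⟩ : ∃ F : ℝ → ℂ, Continuous F ∧ ∀ t, F t ^ n = φ t := by
    rcases {t | φ t ≠ 0}.eq_empty_or_nonempty with hempty | hne
    · refine ⟨0, continuous_const, fun t => ?_⟩
      have : φ t = 0 := by simpa using eq_empty_iff_forall_notMem.mp hempty t
      simp [this, zero_pow hn]
    · have := hU.convex.contractibleSpace hne
      exact exists_continuous_pow_eq_of_isSimplyConnected hφ
        (SimplyConnectedSpace.ofContractible _) hn
  exact exists_continuous_pow_eq_and_apply_eq hn hF hFφ hw

theorem ordConnected_setOf_ne_zero_projIcc {M : Type*} [Zero M] {φ : ℝ → M} {a b : ℝ}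
    (hab : a ≤ b) (hne : ∀ t ∈ Ioo a b, φ t ≠ 0) :
    OrdConnected {t | φ (projIcc a b hab t) ≠ 0} := by
  refine ⟨fun x hx z hz y hy => ?_⟩
  rcases le_or_gt y a with hya | hay
  · rwa [mem_ofPred_eq, projIcc_of_le_left hab hya, ← projIcc_of_le_left hab (hy.1.trans hya)]
  rcases le_or_gt b y with hby | hyb
  · rwa [mem_ofPred_eq, projIcc_of_right_le hab hby, ← projIcc_of_right_le hab (hby.trans hy.2)]
  rw [mem_ofPred_eq, projIcc_of_mem hab ⟨hay.le, hyb.le⟩]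
  exact hne y ⟨hay, hyb⟩

theorem exists_continuous_pow_eq_on_Icc {φ : ℝ → ℂ} (hφ : Continuous φ) {a b : ℝ}
    (hab : a ≤ b) (hne : ∀ t ∈ Ioo a b, φ t ≠ 0) {n : ℕ} (hn : n ≠ 0) {w : ℂ}
    (hw : w ^ n = φ a) : ∃ W : ℝ → ℂ, Continuous W ∧ W a = w ∧ ∀ t ∈ Icc a b, W t ^ n = φ t := by
  -- Freezing `φ` outside `[a, b]` makes its nonvanishing locus an interval.
  have hψ : Continuous fun t => φ (projIcc a b hab t) :=
    hφ.comp (continuous_subtype_val.comp continuous_projIcc)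
  obtain ⟨W, hWc, hWa, hW⟩ := exists_continuous_pow_eq_of_ordConnected hψ
    (ordConnected_setOf_ne_zero_projIcc hab hne) hn (t₀ := a) (by rwa [projIcc_left])
  exact ⟨W, hWc, hWa, fun t ht => by rw [hW, projIcc_of_mem hab ht]⟩

theorem countable_preimage_zero_of_deriv_ne_zero {𝕜 F : Type*} [NontriviallyNormedField 𝕜]
    [SecondCountableTopology 𝕜] [NormedAddCommGroup F] [NormedSpace 𝕜 F] {f : 𝕜 → F}
    (hf : ∀ z, f z = 0 → DifferentiableAt 𝕜 f z) (hs : ∀ z, f z = 0 → deriv f z ≠ 0) :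
    (f ⁻¹' {0}).Countable := by
  refine (HereditarilyLindelofSpace.isLindelof _).countable_of_isDiscrete ?_
  refine isDiscrete_iff_nhdsNE.mpr fun z hz => ?_
  rw [← disjoint_iff, Filter.disjoint_principal_right]
  exact ((hf z hz).hasDerivAt.eventually_ne (hs z hz)).mono fun y hy => hy

theorem Continuous.exists_Ioo_forall_ne {X : Type*} [TopologicalSpace X] [T1Space X]
    {η : ℝ → X} (hη : Continuous η) {a b : ℝ} (hab : a ≤ b) (hne : η a ≠ η b) :
    ∃ a' b', a ≤ a' ∧ a' < b' ∧ b' ≤ b ∧ η a' = η a ∧ η b' = η b ∧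
      ∀ t ∈ Ioo a' b', η t ≠ η a ∧ η t ≠ η b := by
  -- `a'` is the last visit of `η` to `η a`, and `b'` the first visit to `η b` after `a'`.
  set A := Icc a b ∩ η ⁻¹' {η a}
  have hAbdd : BddAbove A := bddAbove_Icc.mono inter_subset_left
  have ha' : sSup A ∈ A := (isClosed_Icc.inter (isClosed_singleton.preimage hη)).csSup_mem
    ⟨a, left_mem_Icc.mpr hab, rfl⟩ hAbdd
  set B := Icc (sSup A) b ∩ η ⁻¹' {η b}
  have hBbdd : BddBelow B := bddBelow_Icc.mono inter_subset_left
  have hb' : sInf B ∈ B := (isClosed_Icc.inter (isClosed_singleton.preimage hη)).csInf_mem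
    ⟨b, right_mem_Icc.mpr ha'.1.2, rfl⟩ hBbdd
  have hlt : sSup A < sInf B := by
    refine hb'.1.1.lt_of_ne fun h => hne ?_
    rw [← ha'.2, h, hb'.2]
  refine ⟨sSup A, sInf B, ha'.1.1, hlt, hb'.1.2, ha'.2, hb'.2,
    fun t ht => ⟨fun h => ?_, fun h => ?_⟩⟩
  · exact ht.1.not_ge (le_csSup hAbdd ⟨⟨ha'.1.1.trans ht.1.le, ht.2.le.trans hb'.1.2⟩, h⟩)
  · exact ht.2.not_ge (csInf_le hBbdd ⟨⟨ht.1.le, ht.2.le.trans hb'.1.2⟩, h⟩)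

theorem Set.Countable.exists_continuous_mapsTo_Ioo_compl {E : Type*} [AddCommGroup E]
    [Module ℝ E] [TopologicalSpace E] [ContinuousAdd E] [ContinuousSMul ℝ E] [T1Space E]
    (h : 1 < Module.rank ℝ E) {s : Set E} (hs : s.Countable) {x y : E} (hxy : x ≠ y) :
    ∃ (η : ℝ → E) (a b : ℝ), Continuous η ∧ a < b ∧ η a = x ∧ η b = y ∧
      MapsTo η (Ioo a b) sᶜ := by
  have hpc := (hs.mono (sdiff_subset (t := {x, y}))).isPathConnected_compl_of_one_lt_rank h
  obtain ⟨γ, hγ⟩ := hpc.joinedIn x (fun h => h.2 (.inl rfl)) y (fun h => h.2 (.inr rfl))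
  obtain ⟨a, b, h0a, hab, hb1, ha, hb, hmid⟩ :=
    γ.continuous_extend.exists_Ioo_forall_ne zero_le_one (by simpa using hxy)
  simp only [Path.extend_zero, Path.extend_one] at ha hb hmid
  refine ⟨γ.extend, a, b, γ.continuous_extend, hab, ha, hb, fun t ht hts => ?_⟩
  have htI : t ∈ Icc (0 : ℝ) 1 := ⟨h0a.trans ht.1.le, ht.2.le.trans hb1⟩
  have hγt := hγ ⟨t, htI⟩
  rw [← γ.extend_apply htI] at hγt
  exact hγt ⟨hts, by simp [(hmid t ht).1, (hmid t ht).2]⟩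

theorem fiber_product_connected_general
    (p q : ℕ) (hp : 2 ≤ p) (hq : 2 ≤ q)
    (f g : ℂ → ℂ) (hf : Differentiable ℂ f) (hg : Differentiable ℂ g)
    (hfsimple : ∀ z, f z = 0 → deriv f z ≠ 0)
    (hA : (g ⁻¹' {0}).Nonempty)
    (hAf : g ⁻¹' {0} ⊆ f ⁻¹' {0}) :
    IsConnected {z : ℂ × ℂ × ℂ | z.2.1 ^ p = f z.1 ∧ z.2.2 ^ q = g z.1} := by
  have hp0 : p ≠ 0 := by omega
  have hq0 : q ≠ 0 := by omega
  obtain ⟨a, hga : g a = 0⟩ := hA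
  have hfa : f a = 0 := hAf hga
  have haS : (a, 0, 0) ∈ {z : ℂ × ℂ × ℂ | z.2.1 ^ p = f z.1 ∧ z.2.2 ^ q = g z.1} := by
    simp [hfa, hga, zero_pow hp0, zero_pow hq0]
  refine ⟨⟨_, haS⟩, isPreconnected_of_forall (a, 0, 0) ?_⟩
  rintro ⟨z₁, z₂, z₃⟩ ⟨hz₂ : z₂ ^ p = f z₁, hz₃ : z₃ ^ q = g z₁⟩
  rcases eq_or_ne z₁ a with rfl | hz₁
  · obtain rfl : z₂ = 0 := pow_eq_zero_iff hp0 |>.mp (hz₂.trans hfa)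
    obtain rfl : z₃ = 0 := pow_eq_zero_iff hq0 |>.mp (hz₃.trans hga)
    exact ⟨{(z₁, 0, 0)}, singleton_subset_iff.mpr haS, rfl, rfl, isPreconnected_singleton⟩
  obtain ⟨η, s, t, hη, hst, hηs, hηt, hmid⟩ :=
    (countable_preimage_zero_of_deriv_ne_zero (fun z _ => hf z) hfsimple
      ).exists_continuous_mapsTo_Ioo_compl (by simp [Complex.rank_real_complex]) hz₁
  have hfη : ∀ u ∈ Ioo s t, f (η u) ≠ 0 := fun u hu => hmid hu
  obtain ⟨W, hW, hWs, hWf⟩ := exists_continuous_pow_eq_on_Icc (hf.continuous.comp hη) hst.le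
    hfη hp0 (w := z₂) (by rwa [Function.comp_apply, hηs])
  obtain ⟨V, hV, hVs, hVg⟩ := exists_continuous_pow_eq_on_Icc (hg.continuous.comp hη) hst.le
    (fun u hu h => hfη u hu (hAf h)) hq0 (w := z₃) (by rwa [Function.comp_apply, hηs])
  have ht : t ∈ Icc s t := right_mem_Icc.mpr hst.le
  have hWt : W t = 0 := pow_eq_zero_iff hp0 |>.mp (by simp [hWf t ht, hηt, hfa])
  have hVt : V t = 0 := pow_eq_zero_iff hq0 |>.mp (by simp [hVg t ht, hηt, hga])
  refine ⟨(fun u => (η u, W u, V u)) '' Icc s t, ?_, ⟨t, ht, by simp [hηt, hWt, hVt]⟩,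
    ⟨s, left_mem_Icc.mpr hst.le, by simp [hηs, hWs, hVs]⟩,
    isPreconnected_Icc.image _ (hη.prodMk (hW.prodMk hV)).continuousOn⟩
  rintro _ ⟨u, hu, rfl⟩
  exact ⟨hWf u hu, hVg u hu⟩

/-- connectedness part of Theorem 4.3.
Let `p, q ≥ 2`. Let `f : ℂ → ℂ` be entire with infinite zero set, all zeros simple, and
`g : ℂ → ℂ` entire with all zeros simple, such that `A = g⁻¹(0)` is a nonempty subset of
`f⁻¹(0)` which is either infinite or finite of even cardinality.  Then the fiber product
`S(f,g) = {(z₁,z₂,z₃) : z₂^p = f z₁ ∧ z₃^q = g z₁}` is a connected subset of `ℂ³`. -/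
theorem fiber_product_connected
    (p q : ℕ) (hp : 2 ≤ p) (hq : 2 ≤ q)
    (f g : ℂ → ℂ) (hf : Differentiable ℂ f) (hg : Differentiable ℂ g)
    (hfzero : (f ⁻¹' {0}).Infinite)
    (hfsimple : ∀ z, f z = 0 → deriv f z ≠ 0)
    (hgsimple : ∀ z, g z = 0 → deriv g z ≠ 0)
    (hA : (g ⁻¹' {0}).Nonempty)
    (hAf : g ⁻¹' {0} ⊆ f ⁻¹' {0})
    (hAcard : (g ⁻¹' {0}).Infinite ∨
      ((g ⁻¹' {0}).Finite ∧ Even (g ⁻¹' {0}).ncard)) :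
    IsConnected {z : ℂ × ℂ × ℂ | z.2.1 ^ p = f z.1 ∧ z.2.2 ^ q = g z.1} :=
  fiber_product_connected_general p q hp hq f g hf hg hfsimple hA hAf
end

section
/- Let p, q ≥ 2 be integers. Let f : ℂ → ℂ be an entire function whose zero set f⁻¹(0) is infinite and all of whose zeros are simple, and let g : ℂ → ℂ be an entire function all of whose zeros are simple, such that A := g⁻¹(0) is an infinite subset of f⁻¹(0). Then the fiber product S(f,g) = {(z₁,z₂,z₃) ∈ ℂ³ : z₂^p = f(z₁) and z₃^q = g(z₁)} has exactly one end; concretely, for every compact subset K of S(f,g) there exists a compact subset K′ of S(f,g) with K ⊆ K′ such that the complement S(f,g) ∖ K′ is nonempty and connected. -/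
/-!
Take `K' = {‖z₁‖ ≤ R}`; it is compact since the other two coordinates are roots of `f` and `g`,
hence bounded over bounded sets. Its complement is path-connected. The zeros of `g` form an
infinite discrete closed set, so there is one, `a`, with `‖a‖ > R`; it is also a zero of `f`, and
the only point above it is `(a, 0, 0)`. Any other point above `x` is joined to it by lifting a path
from `x` to `a` in `{‖z‖ > R}` which meets the zeros of `f` only at its ends: the roots of `f` and
`g` can be continued along the open path and tend to `0` at zeros. In logarithmic coordinates
`{‖z‖ > R}` is a half-plane, and the path is taken to be two segments there; since the zeros of
`f` are countable, a generic choice of the middle vertex avoids them.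
-/

open Set Filter Topology Complex AffineMap

theorem isDiscrete_preimage_zero_of_deriv_ne_zero {𝕜 : Type*} [NontriviallyNormedField 𝕜]
    {f : 𝕜 → 𝕜} (hf : Differentiable 𝕜 f) (hsimple : ∀ z, f z = 0 → deriv f z ≠ 0) :
    IsDiscrete (f ⁻¹' {0}) := by
  refine isDiscrete_iff_nhdsNE.2 fun z hz => inf_principal_eq_bot.2 ?_
  exact (hf z).hasDerivAt.eventually_ne (hsimple z hz)

theorem exists_norm_gt_of_isDiscrete {E : Type*} [NormedAddCommGroup E] [ProperSpace E]
    {s : Set E} (hd : IsDiscrete s) (hc : IsClosed s) (hinf : s.Infinite) (R : ℝ) :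
    ∃ a ∈ s, R < ‖a‖ := by
  by_contra! h
  refine hinf ((Metric.finite_isBounded_inter_isClosed hd (Metric.isBounded_closedBall
    (x := 0) (r := R)) hc).subset fun a ha => ⟨?_, ha⟩)
  simpa using h a ha

theorem exists_pow_eq_one_mul_eq {K : Type*} [Field K] {n : ℕ} (hn : n ≠ 0) {a b : K}
    (h : a ^ n = b ^ n) : ∃ ζ : K, ζ ^ n = 1 ∧ ζ * a = b := by
  rcases eq_or_ne a 0 with rfl | ha
  · rw [zero_pow hn, eq_comm, pow_eq_zero_iff hn] at h
    exact ⟨1, one_pow n, by simp [h]⟩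
  · exact ⟨b / a, by rw [div_pow, ← h, div_self (pow_ne_zero n ha)], div_mul_cancel₀ b ha⟩

theorem norm_le_max_one_of_norm_pow_le {𝕜 : Type*} [NormedDivisionRing 𝕜] {n : ℕ} (hn : n ≠ 0)
    {y : 𝕜} {M : ℝ} (h : ‖y ^ n‖ ≤ M) : ‖y‖ ≤ max 1 M := by
  rcases le_or_gt ‖y‖ 1 with hy | hy
  · exact hy.trans (le_max_left _ _)
  · calc ‖y‖ ≤ ‖y‖ ^ n := le_self_pow₀ hy.le hn
      _ = ‖y ^ n‖ := (norm_pow y n).symm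
      _ ≤ max 1 M := h.trans (le_max_right _ _)

theorem continuousWithinAt_of_pow_eq_of_eq_zero {X 𝕜 : Type*} [TopologicalSpace X]
    [NormedDivisionRing 𝕜] {n : ℕ} (hn : n ≠ 0) {w φ : X → 𝕜} (hw : ∀ x, w x ^ n = φ x)
    {s : Set X} {x : X} (hφ : ContinuousWithinAt φ s x) (hx : φ x = 0) :
    ContinuousWithinAt w s x := by
  have hwx : w x = 0 := (pow_eq_zero_iff hn).1 ((hw x).trans hx)
  have hnorm : ∀ y, ‖w y‖ = ‖φ y‖ ^ (n⁻¹ : ℝ) := fun y => by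
    rw [← hw y, norm_pow, Real.pow_rpow_inv_natCast (norm_nonneg _) hn]
  rw [ContinuousWithinAt, hwx, tendsto_zero_iff_norm_tendsto_zero]
  simp only [hnorm]
  have hφ0 : Tendsto (‖φ ·‖) (𝓝[s] x) (𝓝 0) := by simpa [hx] using hφ.norm.tendsto
  have hrpow := (Real.continuousAt_rpow_const 0 (n⁻¹ : ℝ) (Or.inr (by positivity))).tendsto
  simpa [Function.comp_def, Real.zero_rpow (inv_ne_zero (Nat.cast_ne_zero.2 hn))] using
    hrpow.comp hφ0

theorem exists_continuousOn_pow_eq_of_ne_zero {φ : ℝ → ℂ} (hφ : Continuous φ)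
    (hφ0 : ∀ s ∈ Ioo (0 : ℝ) 1, φ s ≠ 0) {n : ℕ} (hn : n ≠ 0) {y : ℂ} (hy : y ^ n = φ 0) :
    ∃ w : ℝ → ℂ, ContinuousOn w (Icc 0 1) ∧ (∀ s, w s ^ n = φ s) ∧ w 0 = y := by
  set U := connectedComponentIn {s | φ s ≠ 0} (1 / 2)
  have hUo : IsOpen U := (isOpen_ne_fun hφ continuous_const).connectedComponentIn
  have hU : ∀ s ∈ Icc (0 : ℝ) 1, φ s ≠ 0 → s ∈ U := by
    intro s hs hs0
    refine isPreconnected_uIcc.subset_connectedComponentIn left_mem_uIcc (fun r hr => ?_)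
      right_mem_uIcc
    rcases eq_or_ne r s with rfl | hrs
    · exact hs0
    · apply hφ0
      rcases mem_uIcc.1 hr with ⟨h1, h2⟩ | ⟨h1, h2⟩ <;> rcases hrs.lt_or_gt with h | h <;>
        exact ⟨by linarith [hs.1], by linarith [hs.2]⟩
  have hUc : IsSimplyConnected U := by
    have := isPreconnected_connectedComponentIn.convex.contractibleSpace
      ⟨1 / 2, hU _ ⟨by norm_num, by norm_num⟩ (hφ0 _ ⟨by norm_num, by norm_num⟩)⟩
    exact SimplyConnectedSpace.ofContractible U
  obtain ⟨F, hFc, hF⟩ := exists_continuousOn_pow_eq hUc hUo hφ.continuousOn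
    (fun ⟨s, hs, hs0⟩ => connectedComponentIn_subset _ _ hs hs0) hn
  obtain ⟨ζ, hζ, rfl⟩ := exists_pow_eq_one_mul_eq hn ((hF 0).trans hy.symm)
  have hw : ∀ s, (ζ * F s) ^ n = φ s := fun s => by rw [mul_pow, hζ, one_mul, hF]
  refine ⟨fun s => ζ * F s, fun s hs => ?_, hw, rfl⟩
  by_cases h : φ s = 0
  · exact continuousWithinAt_of_pow_eq_of_eq_zero hn hw hφ.continuousWithinAt h
  · exact ((hFc.continuousAt (hUo.mem_nhds (hU s hs h))).const_mul ζ).continuousWithinAt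

/-- Each `c ∈ C` lies on the segment `(e, m t]` for at most one `t`, which is read off from
`(c - e) / D = s * (μ + t * I)`. -/
theorem countable_setOf_lineMap_mem {C : Set ℂ} (hC : C.Countable) {e D : ℂ} (hD : D ≠ 0)
    {μ : ℝ} (hμ : μ ≠ 0) {m : ℝ → ℂ} (hm : ∀ t : ℝ, m t - e = D * (μ + t * I)) :
    {t : ℝ | ∃ s ∈ Ioc (0 : ℝ) 1, lineMap e (m t) s ∈ C}.Countable := by
  refine (hC.image fun c => ((c - e) / D).im / ((c - e) / D).re * μ).mono ?_
  rintro t ⟨s, hs, hsC⟩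
  refine ⟨_, hsC, ?_⟩
  have h : (lineMap e (m t) s - e) / D = s * μ + s * t * I := by
    rw [lineMap_apply_module', hm]
    field_simp
    simp only [Complex.real_smul]
    ring
  simp only [h, add_re, add_im, mul_re, mul_im, ofReal_re, ofReal_im, I_re, I_im]
  field_simp [hs.1.ne']
  ring

theorem exists_mem_forall_lineMap_notMem {C : Set ℂ} (hC : C.Countable) {u v : ℂ} (huv : u ≠ v)
    {O : Set ℂ} (hO : O ∈ 𝓝 (midpoint ℝ u v)) :
    ∃ m ∈ O, ∀ s ∈ Ioc (0 : ℝ) 1, lineMap u m s ∉ C ∧ lineMap v m s ∉ C := by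
  set m : ℝ → ℂ := fun t => u + (v - u) * (1 / 2 + t * I)
  have hm0 : m 0 = midpoint ℝ u v := by
    simp only [m, midpoint_eq_smul_add, Complex.real_smul, invOf_eq_inv]
    push_cast
    ring
  have hmO : {t | m t ∈ O} ∈ 𝓝 (0 : ℝ) :=
    (by fun_prop : Continuous m).continuousAt.preimage_mem_nhds (hm0 ▸ hO)
  have hD : v - u ≠ 0 := sub_ne_zero.2 huv.symm
  have hbad := (countable_setOf_lineMap_mem hC hD (μ := 1 / 2) (by norm_num) (m := m)
    fun t => by push_cast; ring).union
    (countable_setOf_lineMap_mem hC hD (e := v) (μ := -1 / 2) (by norm_num) (m := m)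
    fun t => by push_cast; ring)
  obtain ⟨t, htgood, htO⟩ := (hbad.dense_compl ℝ).inter_nhds_nonempty hmO
  exact ⟨m t, htO, fun s hs => ⟨fun h => htgood (Or.inl ⟨s, hs, h⟩),
    fun h => htgood (Or.inr ⟨s, hs, h⟩)⟩⟩

def fiberProduct (p q : ℕ) (f g : ℂ → ℂ) : Set (ℂ × ℂ × ℂ) :=
  {z | z.2.1 ^ p = f z.1 ∧ z.2.2 ^ q = g z.1}

namespace fiberProduct

variable {p q : ℕ} {f g : ℂ → ℂ}

theorem isClosed (hf : Continuous f) (hg : Continuous g) : IsClosed (fiberProduct p q f g) :=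
  (isClosed_eq (by fun_prop) (by fun_prop)).inter (isClosed_eq (by fun_prop) (by fun_prop))

theorem eq_of_eq_zero (hp : p ≠ 0) (hq : q ≠ 0) {z : ℂ × ℂ × ℂ} (hz : z ∈ fiberProduct p q f g)
    (hf0 : f z.1 = 0) (hg0 : g z.1 = 0) : z = (z.1, 0, 0) := by
  obtain ⟨h₂, h₃⟩ := hz
  rw [hf0, pow_eq_zero_iff hp] at h₂
  rw [hg0, pow_eq_zero_iff hq] at h₃
  ext <;> simp [h₂, h₃]

theorem isCompact_setOf_norm_fst_le (hp : p ≠ 0) (hq : q ≠ 0) (hf : Continuous f)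
    (hg : Continuous g) (R : ℝ) : IsCompact {z : fiberProduct p q f g | ‖z.1.1‖ ≤ R} := by
  have hball := isCompact_closedBall (0 : ℂ) R
  obtain ⟨Mf, hMf⟩ := hball.exists_bound_of_continuousOn hf.continuousOn
  obtain ⟨Mg, hMg⟩ := hball.exists_bound_of_continuousOn hg.continuousOn
  have hB := hball.prod ((isCompact_closedBall (0 : ℂ) (max 1 Mf)).prod
    (isCompact_closedBall (0 : ℂ) (max 1 Mg)))
  convert (isClosed hf hg).isClosedEmbedding_subtypeVal.isCompact_preimage hB using 1
  ext ⟨z, h₂, h₃⟩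
  simp only [mem_ofPred_eq, mem_preimage, mem_prod, mem_closedBall_zero_iff]
  refine ⟨fun hz => ⟨hz, ?_, ?_⟩, fun hz => hz.1⟩
  · exact norm_le_max_one_of_norm_pow_le hp (h₂ ▸ hMf _ (mem_closedBall_zero_iff.2 hz))
  · exact norm_le_max_one_of_norm_pow_le hq (h₃ ▸ hMg _ (mem_closedBall_zero_iff.2 hz))

theorem exists_joinedIn_of_ne_zero (hp : p ≠ 0) (hq : q ≠ 0) (hf : Continuous f)
    (hg : Continuous g) {γ : ℝ → ℂ} (hγ : Continuous γ) (hfγ : ∀ s ∈ Ioo (0 : ℝ) 1, f (γ s) ≠ 0)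
    (hgγ : ∀ s ∈ Ioo (0 : ℝ) 1, g (γ s) ≠ 0) {V : Set ℂ} (hγV : ∀ s ∈ Icc (0 : ℝ) 1, γ s ∈ V)
    (P : fiberProduct p q f g) (hP : P.1.1 = γ 0) :
    ∃ Q : fiberProduct p q f g, Q.1.1 = γ 1 ∧ JoinedIn {z | z.1.1 ∈ V} P Q := by
  obtain ⟨w₂, hw₂c, hw₂, hw₂0⟩ :=
    exists_continuousOn_pow_eq_of_ne_zero (hf.comp hγ) hfγ hp (y := P.1.2.1)
      (by simpa [← hP] using P.2.1)
  obtain ⟨w₃, hw₃c, hw₃, hw₃0⟩ :=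
    exists_continuousOn_pow_eq_of_ne_zero (hg.comp hγ) hgγ hq (y := P.1.2.2)
      (by simpa [← hP] using P.2.2)
  let Γ : unitInterval → fiberProduct p q f g := fun t => ⟨(γ t, w₂ t, w₃ t), hw₂ t, hw₃ t⟩
  have hΓ : Continuous Γ := by
    refine Continuous.subtype_mk (hγ.comp continuous_subtype_val |>.prodMk ?_) _
    exact (hw₂c.comp_continuous continuous_subtype_val fun t => t.2).prodMk
      (hw₃c.comp_continuous continuous_subtype_val fun t => t.2)
  refine ⟨Γ 1, rfl, ⟨⟨⟨Γ, hΓ⟩, ?_, rfl⟩, fun t => hγV t t.2⟩⟩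
  exact Subtype.ext (Prod.ext hP.symm (Prod.ext hw₂0 hw₃0))

theorem exists_joinedIn_of_exp_lineMap (hp : p ≠ 0) (hq : q ≠ 0) (hf : Continuous f)
    (hg : Continuous g) (hgf : g ⁻¹' {0} ⊆ f ⁻¹' {0}) {R : ℝ} (hR : 0 < R) {u w : ℂ}
    (hu : Real.log R < u.re) (hw : Real.log R < w.re)
    (hfne : ∀ s ∈ Ioo (0 : ℝ) 1, f (exp (lineMap u w s)) ≠ 0)
    (P : fiberProduct p q f g) (hP : P.1.1 = exp u) :
    ∃ Q : fiberProduct p q f g, Q.1.1 = exp w ∧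
      JoinedIn {z : fiberProduct p q f g | R < ‖z.1.1‖} P Q := by
  have hexp : ∀ s ∈ Icc (0 : ℝ) 1, R < ‖exp (lineMap u w s)‖ := fun s hs => by
    rw [norm_exp, ← Real.log_lt_iff_lt_exp hR]
    exact (convex_halfSpace_re_gt _).lineMap_mem hu hw hs
  obtain ⟨Q, hQ, hPQ⟩ := exists_joinedIn_of_ne_zero hp hq hf hg (V := {z | R < ‖z‖})
    (continuous_exp.comp (lineMap_continuous (p := u) (q := w))) hfne
    (fun s hs hg0 => hfne s hs (hgf hg0)) hexp P (by simpa using hP)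
  exact ⟨Q, by simpa using hQ, hPQ⟩

theorem isPathConnected_setOf_norm_fst_gt (hp : p ≠ 0) (hq : q ≠ 0) (hf : Continuous f)
    (hg : Continuous g) (hZ : (f ⁻¹' {0}).Countable) (hgf : g ⁻¹' {0} ⊆ f ⁻¹' {0}) {R : ℝ}
    (hR : 0 < R) {a : ℂ} (ha : g a = 0) (haR : R < ‖a‖) :
    IsPathConnected {z : fiberProduct p q f g | R < ‖z.1.1‖} := by
  have hfa : f a = 0 := hgf ha
  let A : fiberProduct p q f g := ⟨(a, 0, 0), by simp [fiberProduct, hfa, ha, hp, hq]⟩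
  have hA : ∀ Q : fiberProduct p q f g, Q.1.1 = a → Q = A := fun Q hQ =>
    Subtype.ext ((eq_of_eq_zero hp hq Q.2 (hQ ▸ hfa) (hQ ▸ ha)).trans (by rw [hQ]))
  refine ⟨A, haR, fun {P} hP => ?_⟩
  by_cases hPa : P.1.1 = a
  · rw [hA P hPa]
    exact JoinedIn.refl haR
  have hne0 : ∀ z : ℂ, R < ‖z‖ → z ≠ 0 := fun z hz h => by simp [h] at hz; linarith
  have hlog : ∀ z : ℂ, R < ‖z‖ → Real.log R < (log z).re := fun z hz => by
    simpa [log_re] using Real.log_lt_log hR hz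
  obtain ⟨m, hmR, hm⟩ := exists_mem_forall_lineMap_notMem hZ.preimage_cexp
    (u := log P.1.1) (v := log a)
    (fun h => hPa (by rw [← exp_log (hne0 _ hP), ← exp_log (hne0 _ haR), h]))
    ((isOpen_lt continuous_const continuous_re).mem_nhds
      ((convex_halfSpace_re_gt _).midpoint_mem (hlog _ hP) (hlog _ haR)))
  obtain ⟨Q, hQ, hPQ⟩ := exists_joinedIn_of_exp_lineMap hp hq hf hg hgf hR (hlog _ hP) hmR
    (fun s hs => (hm s (Ioo_subset_Ioc_self hs)).1) P (exp_log (hne0 _ hP)).symm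
  obtain ⟨Q', hQ', hQA⟩ := exists_joinedIn_of_exp_lineMap hp hq hf hg hgf hR hmR (hlog _ haR)
    (fun s hs => by
      have := (hm (1 - s) ⟨by linarith [hs.2], by linarith [hs.1]⟩).2
      rw [lineMap_apply_one_sub] at this
      simpa using this) Q hQ
  rw [hA Q' (by rw [hQ', exp_log (hne0 _ haR)])] at hQA
  exact (hPQ.trans hQA).symm

end fiberProduct

theorem fiber_product_one_end_general
    (p q : ℕ) (hp : 2 ≤ p) (hq : 2 ≤ q)
    (f g : ℂ → ℂ) (hf : Differentiable ℂ f) (hg : Differentiable ℂ g)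
    (hfsimple : ∀ z, f z = 0 → deriv f z ≠ 0)
    (hAf : g ⁻¹' {0} ⊆ f ⁻¹' {0})
    (hAinf : (g ⁻¹' {0}).Infinite) :
    ∀ K : Set {z : ℂ × ℂ × ℂ // z.2.1 ^ p = f z.1 ∧ z.2.2 ^ q = g z.1},
      IsCompact K → ∃ K' : Set {z : ℂ × ℂ × ℂ // z.2.1 ^ p = f z.1 ∧ z.2.2 ^ q = g z.1},
        IsCompact K' ∧ K ⊆ K' ∧ IsConnected K'ᶜ := by
  intro K hK
  have hp0 : p ≠ 0 := by omega
  have hq0 : q ≠ 0 := by omega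
  have hZ : IsDiscrete (f ⁻¹' {0}) := isDiscrete_preimage_zero_of_deriv_ne_zero hf hfsimple
  obtain ⟨r, hr⟩ := (hK.image (continuous_subtype_val.fst.norm)).bddAbove
  obtain ⟨a, ha, haR⟩ := exists_norm_gt_of_isDiscrete (hZ.mono hAf)
    (isClosed_singleton.preimage hg.continuous) hAinf (max 1 r)
  refine ⟨{z | ‖z.1.1‖ ≤ max 1 r}, fiberProduct.isCompact_setOf_norm_fst_le hp0 hq0
    hf.continuous hg.continuous _, fun z hz => (hr ⟨z, hz, rfl⟩).trans (le_max_right _ _), ?_⟩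
  simp only [compl_ofPred, not_le]
  exact (fiberProduct.isPathConnected_setOf_norm_fst_gt hp0 hq0 hf.continuous hg.continuous
    ((HereditarilyLindelofSpace.isLindelof _).countable_of_isDiscrete hZ) hAf
    (by positivity) ha haR).isConnected

/-- Theorem 4.3 (1).
If moreover `A = g⁻¹(0)` is infinite, then the fiber product `S(f,g)` has exactly one end:
for every compact `K ⊆ S(f,g)` there is a compact `K′ ⊇ K` such that the complement
`S(f,g) ∖ K′` is nonempty and connected. -/
theorem fiber_product_one_end
    (p q : ℕ) (hp : 2 ≤ p) (hq : 2 ≤ q)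
    (f g : ℂ → ℂ) (hf : Differentiable ℂ f) (hg : Differentiable ℂ g)
    (hfzero : (f ⁻¹' {0}).Infinite)
    (hfsimple : ∀ z, f z = 0 → deriv f z ≠ 0)
    (hgsimple : ∀ z, g z = 0 → deriv g z ≠ 0)
    (hAf : g ⁻¹' {0} ⊆ f ⁻¹' {0})
    (hAinf : (g ⁻¹' {0}).Infinite) :
    ∀ K : Set {z : ℂ × ℂ × ℂ // z.2.1 ^ p = f z.1 ∧ z.2.2 ^ q = g z.1},
      IsCompact K → ∃ K' : Set {z : ℂ × ℂ × ℂ // z.2.1 ^ p = f z.1 ∧ z.2.2 ^ q = g z.1},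
        IsCompact K' ∧ K ⊆ K' ∧ IsConnected K'ᶜ :=
  fiber_product_one_end_general p q hp hq f g hf hg hfsimple hAf hAinf
end

section
/- Let p = q = 2. Let f : ℂ → ℂ be an entire function whose zero set f⁻¹(0) is infinite and all of whose zeros are simple, and let g : ℂ → ℂ be an entire function all of whose zeros are simple such that A := g⁻¹(0) is a nonempty subset of f⁻¹(0). Define α₂ : S(f,g) → S(f,g) by α₂(z₁,z₂,z₃) = (z₁,−z₂,z₃); this is a well-defined self-homeomorphism of S(f,g) with α₂ ∘ α₂ = id. Moreover, the projection π₂ : S(f,g) → S₂(g), π₂(z₁,z₂,z₃) = (z₁,z₃), is continuous and surjective, its fibers are exactly the α₂-orbits (π₂(u) = π₂(v) if and only if v = u or v = α₂(u)), and the induced map from the quotient topological space S(f,g)/⟨α₂⟩ (the quotient of S(f,g) by the equivalence relation u ∼ α₂(u)) to S₂(g) is a homeomorphism. -/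
/-- The fiber product `S(f,g)` of two hyperelliptic curves (`p = q = 2`). -/
abbrev HypFiberProd (f g : ℂ → ℂ) : Type :=
  {z : ℂ × ℂ × ℂ // z.2.1 ^ 2 = f z.1 ∧ z.2.2 ^ 2 = g z.1}

/-- The hyperelliptic curve `S₂(F) = {(z₁,z₂) : z₂² = F z₁}`. -/
abbrev HypCurve (F : ℂ → ℂ) : Type := {w : ℂ × ℂ // w.2 ^ 2 = F w.1}

/-- The relation `u ∼ α₂ u` on `S(f,g)`, where `α₂(z₁,z₂,z₃) = (z₁,-z₂,z₃)`. -/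
def negSecondRel (f g : ℂ → ℂ) (u v : HypFiberProd f g) : Prop :=
  (v : ℂ × ℂ × ℂ) = ((u : ℂ × ℂ × ℂ).1, -(u : ℂ × ℂ × ℂ).2.1, (u : ℂ × ℂ × ℂ).2.2)

/-!
The projection `π₂ : S(f,g) → S₂(g)` forgets `z₂`, which is determined up to sign by `z₂² = f(z₁)`,
so its fibres are the `α₂`-orbits. Over a compact set of `S₂(g)` the coordinate `z₂` stays
bounded because `f` is continuous, so `π₂` is proper, hence closed, hence a quotient map; a
quotient map identifies its target with the quotient of its source by its fibres.
-/

open Topology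

theorem Topology.IsQuotientMap.isHomeomorph_quotLift {X Y : Type*} [TopologicalSpace X]
    [TopologicalSpace Y] {π : X → Y} {r : X → X → Prop} (hπ : IsQuotientMap π)
    (hr : ∀ u v, r u v → π u = π v) (hfib : ∀ u v, π u = π v → u = v ∨ r u v) :
    IsHomeomorph (Quot.lift π hr) := by
  refine isHomeomorph_iff_isQuotientMap_injective.mpr
    ⟨isQuotientMap_quot_mk.of_comp_isQuotientMap hπ, ?_⟩
  rintro ⟨u⟩ ⟨v⟩ huv
  rcases hfib u v huv with rfl | h
  · rfl
  · exact Quot.sound h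

theorem isProperMap_fst_subtype_pow_eq {X 𝕜 : Type*} [TopologicalSpace X] [T2Space X]
    [CompactlyGeneratedSpace X] [NormedField 𝕜] [ProperSpace 𝕜] {F : X → 𝕜}
    (hF : Continuous F) {n : ℕ} (hn : n ≠ 0) :
    IsProperMap (fun p : {p : X × 𝕜 // p.2 ^ n = F p.1} ↦ p.1.1) := by
  refine isProperMap_iff_isCompact_preimage.mpr ⟨by fun_prop, fun K hK ↦ ?_⟩
  obtain ⟨M, hM⟩ := hK.exists_bound_of_continuousOn hF.continuousOn
  have hbound : ∀ p : X × 𝕜, p.1 ∈ K → p.2 ^ n = F p.1 → ‖p.2‖ ≤ max 1 M := by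
    rintro ⟨x, y⟩ hx hxy
    rcases le_or_gt ‖y‖ 1 with hy | hy
    · exact le_max_of_le_left hy
    · calc ‖y‖ ≤ ‖y‖ ^ n := le_self_pow₀ hy.le hn
        _ = ‖F x‖ := by rw [← norm_pow, hxy]
        _ ≤ max 1 M := le_max_of_le_right (hM x hx)
  change IsCompact (Subtype.val ⁻¹' (Prod.fst ⁻¹' K : Set (X × 𝕜)))
  rw [IsEmbedding.subtypeVal.isCompact_iff, Set.image_preimage_eq_inter_range,
    Subtype.range_coe_subtype]
  refine (hK.prod (isCompact_closedBall 0 (max 1 M))).of_isClosed_subset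
    ((hK.isClosed.preimage continuous_fst).inter (isClosed_eq (by fun_prop) (by fun_prop))) ?_
  rintro p ⟨hpK, hp⟩
  exact ⟨hpK, mem_closedBall_zero_iff.mpr (hbound p hpK hp)⟩

namespace HypFiberProd

variable (f g : ℂ → ℂ)

def negSecond : HypFiberProd f g ≃ₜ HypFiberProd f g where
  toFun u := ⟨(u.1.1, -u.1.2.1, u.1.2.2), by rw [neg_sq]; exact u.2.1, u.2.2⟩
  invFun u := ⟨(u.1.1, -u.1.2.1, u.1.2.2), by rw [neg_sq]; exact u.2.1, u.2.2⟩
  left_inv u := by simp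
  right_inv u := by simp
  continuous_toFun := by fun_prop
  continuous_invFun := by fun_prop

theorem negSecond_trans_self : (negSecond f g).trans (negSecond f g) = Homeomorph.refl _ := by
  ext u <;> simp [negSecond]

def projSecond (u : HypFiberProd f g) : HypCurve g := ⟨(u.1.1, u.1.2.2), u.2.2⟩

theorem continuous_projSecond : Continuous (projSecond f g) := by
  unfold projSecond; fun_prop

theorem projSecond_surjective : Function.Surjective (projSecond f g) := by
  rintro ⟨⟨z₁, z₃⟩, hz₃⟩
  obtain ⟨z₂, hz₂⟩ := IsAlgClosed.exists_pow_nat_eq (f z₁) two_pos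
  exact ⟨⟨(z₁, z₂, z₃), hz₂, hz₃⟩, rfl⟩

variable {f g}

theorem projSecond_eq_projSecond_iff (u v : HypFiberProd f g) :
    projSecond f g u = projSecond f g v ↔ v = u ∨ v = negSecond f g u := by
  obtain ⟨⟨a₁, a₂, a₃⟩, ha₂, -⟩ := u
  obtain ⟨⟨b₁, b₂, b₃⟩, hb₂, -⟩ := v
  simp only [projSecond, negSecond, Subtype.mk.injEq, Prod.mk.injEq, Homeomorph.homeomorph_mk_coe,
    Equiv.coe_fn_mk]
  constructor
  · rintro ⟨rfl, rfl⟩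
    have hsq : b₂ ^ 2 = a₂ ^ 2 := ha₂ ▸ hb₂
    rcases sq_eq_sq_iff_eq_or_eq_neg.mp hsq with rfl | rfl
    · exact Or.inl ⟨rfl, rfl, rfl⟩
    · exact Or.inr ⟨rfl, rfl, rfl⟩
  · rintro (⟨rfl, -, rfl⟩ | ⟨rfl, -, rfl⟩) <;> exact ⟨rfl, rfl⟩

theorem negSecondRel_iff (u v : HypFiberProd f g) :
    negSecondRel f g u v ↔ v = negSecond f g u :=
  ⟨fun h ↦ Subtype.ext h, congrArg Subtype.val⟩

/-- `S(f,g)` is the double cover `{(w, z₂) : z₂² = f(z₁)}` of `S₂(g)`, with `w = (z₁, z₃)`. -/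
def homeomorphCover : HypFiberProd f g ≃ₜ {p : HypCurve g × ℂ // p.2 ^ 2 = f p.1.1.1} where
  toFun u := ⟨(projSecond f g u, u.1.2.1), u.2.1⟩
  invFun p := ⟨(p.1.1.1.1, p.1.2, p.1.1.1.2), p.2, p.1.1.2⟩
  left_inv _ := rfl
  right_inv _ := rfl
  continuous_toFun := by unfold projSecond; fun_prop
  continuous_invFun := by fun_prop

theorem isProperMap_projSecond (hf : Continuous f) : IsProperMap (projSecond f g) :=
  (isProperMap_fst_subtype_pow_eq (F := fun w : HypCurve g ↦ f w.1.1) (by fun_prop)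
    two_ne_zero).comp homeomorphCover.isProperMap

end HypFiberProd

open HypFiberProd

theorem quotient_by_alpha2_homeomorphic_general
    (f g : ℂ → ℂ) (hf : Differentiable ℂ f) :
    ∃ (α₂ : HypFiberProd f g ≃ₜ HypFiberProd f g) (π₂ : HypFiberProd f g → HypCurve g),
      (∀ u : HypFiberProd f g, (α₂ u : ℂ × ℂ × ℂ) =
        ((u : ℂ × ℂ × ℂ).1, -(u : ℂ × ℂ × ℂ).2.1, (u : ℂ × ℂ × ℂ).2.2)) ∧
      α₂.trans α₂ = Homeomorph.refl _ ∧
      (∀ u : HypFiberProd f g,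
        (π₂ u : ℂ × ℂ) = ((u : ℂ × ℂ × ℂ).1, (u : ℂ × ℂ × ℂ).2.2)) ∧
      Continuous π₂ ∧ Function.Surjective π₂ ∧
      (∀ u v : HypFiberProd f g, π₂ u = π₂ v ↔ v = u ∨ v = α₂ u) ∧
      ∃ h : Quot (negSecondRel f g) ≃ₜ HypCurve g,
        ∀ u : HypFiberProd f g, h (Quot.mk _ u) = π₂ u := by
  have hquot : IsQuotientMap (projSecond f g) :=
    (isProperMap_projSecond hf.continuous).isClosedMap.isQuotientMap
      (continuous_projSecond f g) (projSecond_surjective f g)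
  have hrel (u v) (h : negSecondRel f g u v) : projSecond f g u = projSecond f g v :=
    (projSecond_eq_projSecond_iff u v).mpr (.inr ((negSecondRel_iff u v).mp h))
  have hfib (u v) (h : projSecond f g u = projSecond f g v) : u = v ∨ negSecondRel f g u v :=
    ((projSecond_eq_projSecond_iff u v).mp h).imp Eq.symm (negSecondRel_iff u v).mpr
  exact ⟨negSecond f g, projSecond f g, fun _ ↦ rfl, negSecond_trans_self f g, fun _ ↦ rfl,
    continuous_projSecond f g, projSecond_surjective f g, projSecond_eq_projSecond_iff,
    (hquot.isHomeomorph_quotLift hrel hfib).homeomorph, fun _ ↦ rfl⟩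

/-- topological content of Lemma 4.6, second quotient.
`α₂(z₁,z₂,z₃) = (z₁,-z₂,z₃)` is a well-defined self-homeomorphism of `S(f,g)` of order two,
the projection `π₂(z₁,z₂,z₃) = (z₁,z₃)` onto `S₂(g)` is continuous and surjective with fibers
exactly the `α₂`-orbits, and the induced map `S(f,g)/⟨α₂⟩ → S₂(g)` is a homeomorphism. -/
theorem quotient_by_alpha2_homeomorphic
    (f g : ℂ → ℂ) (hf : Differentiable ℂ f) (hg : Differentiable ℂ g)
    (hfzero : (f ⁻¹' {0}).Infinite)
    (hfsimple : ∀ z, f z = 0 → deriv f z ≠ 0)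
    (hgsimple : ∀ z, g z = 0 → deriv g z ≠ 0)
    (hA : (g ⁻¹' {0}).Nonempty) (hAf : g ⁻¹' {0} ⊆ f ⁻¹' {0}) :
    ∃ (α₂ : HypFiberProd f g ≃ₜ HypFiberProd f g) (π₂ : HypFiberProd f g → HypCurve g),
      (∀ u : HypFiberProd f g, (α₂ u : ℂ × ℂ × ℂ) =
        ((u : ℂ × ℂ × ℂ).1, -(u : ℂ × ℂ × ℂ).2.1, (u : ℂ × ℂ × ℂ).2.2)) ∧
      α₂.trans α₂ = Homeomorph.refl _ ∧
      (∀ u : HypFiberProd f g,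
        (π₂ u : ℂ × ℂ) = ((u : ℂ × ℂ × ℂ).1, (u : ℂ × ℂ × ℂ).2.2)) ∧
      Continuous π₂ ∧ Function.Surjective π₂ ∧
      (∀ u v : HypFiberProd f g, π₂ u = π₂ v ↔ v = u ∨ v = α₂ u) ∧
      ∃ h : Quot (negSecondRel f g) ≃ₜ HypCurve g,
        ∀ u : HypFiberProd f g, h (Quot.mk _ u) = π₂ u :=
  quotient_by_alpha2_homeomorphic_general f g hf
end

section
/- Let f : ℂ → ℂ be an entire function whose zero set f⁻¹(0) is infinite and all of whose zeros are simple, and let g, h : ℂ → ℂ be entire functions all of whose zeros are simple, such that A := g⁻¹(0) and B := h⁻¹(0) are nonempty subsets of f⁻¹(0), each of which is either infinite or finite of even cardinality. Let S(f,g) = {(z₁,z₂,z₃) ∈ ℂ³ : z₂² = f(z₁), z₃² = g(z₁)} and S(f,h) = {(z₁,z₂,z₃) ∈ ℂ³ : z₂² = f(z₁), z₃² = h(z₁)}, with their subspace topologies. Suppose there exists a bijective holomorphic map t : ℂ → ℂ such that t(f⁻¹(0)) = f⁻¹(0) and t(A) = B. Then there exists a homeomorphism T : S(f,g) → S(f,h)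 which carries the singular locus onto the singular locus, i.e. T({(z₁,z₂,z₃) ∈ S(f,g) : z₁ ∈ A}) = {(z₁,z₂,z₃) ∈ S(f,h) : z₁ ∈ B}. -/
/-!
The bijection `t` is a homeomorphism with nowhere vanishing derivative, so, the zeros of `f`, `g`
and `h` being simple, the quotients `f ∘ t / f` and `h ∘ t / g` extend to continuous nowhere
vanishing functions on `ℂ`. As `ℂ` is simply connected they have continuous square roots `s₁`,
`s₂`, and `(z₁, z₂, z₃) ↦ (t z₁, s₁ z₁ * z₂, s₂ z₁ * z₃)` is the required homeomorphism; it maps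
the fibres over `g⁻¹(0)` to the fibres over `t(g⁻¹(0)) = h⁻¹(0)`.
-/

open Filter Topology Set Function

theorem Function.Injective.apply_mem_iff_of_image_eq {α β : Type*} {t : α → β}
    (ht : Injective t) {s : Set α} {u : Set β} (h : t '' s = u) (a : α) : t a ∈ u ↔ a ∈ s :=
  h ▸ ht.mem_set_image

section Quotient

variable {𝕜 : Type*} [NontriviallyNormedField 𝕜]

theorem tendsto_div_nhdsNE_of_hasDerivAt {F G : 𝕜 → 𝕜} {z₀ F' G' : 𝕜}
    (hF : HasDerivAt F F' z₀) (hG : HasDerivAt G G' z₀) (hF0 : F z₀ = 0) (hG0 : G z₀ = 0)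
    (hG' : G' ≠ 0) : Tendsto (fun z => F z / G z) (𝓝[≠] z₀) (𝓝 (F' / G')) := by
  refine ((hasDerivAt_iff_tendsto_slope.mp hF).div (hasDerivAt_iff_tendsto_slope.mp hG)
    hG').congr' ?_
  filter_upwards [self_mem_nhdsWithin] with z hz
  have hz : z - z₀ ≠ 0 := sub_ne_zero.mpr hz
  rw [Pi.div_apply, slope_def_field, slope_def_field, hF0, hG0, sub_zero, sub_zero]
  field_simp

theorem exists_continuous_mul_eq {F G : 𝕜 → 𝕜} (hF : Differentiable 𝕜 F)
    (hG : Differentiable 𝕜 G) (hGsimple : ∀ z, G z = 0 → deriv G z ≠ 0)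
    (hFG : ∀ z, G z = 0 → F z = 0) :
    ∃ q : 𝕜 → 𝕜, Continuous q ∧ (∀ z, q z * G z = F z) ∧
      ∀ z, G z = 0 → q z = deriv F z / deriv G z := by
  classical
  refine ⟨fun z => if G z = 0 then deriv F z / deriv G z else F z / G z,
    continuous_iff_continuousAt.mpr fun z₀ => ?_, fun z => ?_, fun z hz => if_pos hz⟩
  · by_cases hz₀ : G z₀ = 0
    · rw [← continuousWithinAt_compl_self, ContinuousWithinAt, if_pos hz₀]
      refine (tendsto_div_nhdsNE_of_hasDerivAt (hF z₀).hasDerivAt (hG z₀).hasDerivAt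
        (hFG z₀ hz₀) hz₀ (hGsimple z₀ hz₀)).congr' ?_
      filter_upwards [(hG z₀).hasDerivAt.eventually_ne (c := 0) (hGsimple z₀ hz₀)] with z hz
      rw [if_neg hz]
    · refine ((hF z₀).continuousAt.div (hG z₀).continuousAt hz₀).congr ?_
      filter_upwards [(hG z₀).continuousAt.eventually_ne hz₀] with z hz
      rw [if_neg hz]
      rfl
  · by_cases hz : G z = 0
    · rw [hz, hFG z hz, mul_zero]
    · dsimp only
      rw [if_neg hz, div_mul_cancel₀ _ hz]

end Quotient

namespace Complex

theorem exists_continuous_pow_eq {q : ℂ → ℂ} (hq : Continuous q) (hq0 : ∀ z, q z ≠ 0)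
    {n : ℕ} (hn : n ≠ 0) : ∃ s : ℂ → ℂ, Continuous s ∧ ∀ z, s z ^ n = q z := by
  have : ContractibleSpace (univ : Set ℂ) := convex_univ.contractibleSpace univ_nonempty
  obtain ⟨s, hs, hsq⟩ := exists_continuousOn_pow_eq (SimplyConnectedSpace.ofContractible _)
    isOpen_univ hq.continuousOn (by simpa using hq0) hn
  exact ⟨s, continuousOn_univ.mp hs, hsq⟩

theorem exists_continuous_sq_mul_eq_comp {F G t : ℂ → ℂ} (hF : Differentiable ℂ F)
    (hG : Differentiable ℂ G) (ht : Differentiable ℂ t)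
    (hFsimple : ∀ z, F z = 0 → deriv F z ≠ 0) (hGsimple : ∀ z, G z = 0 → deriv G z ≠ 0)
    (ht' : ∀ z, deriv t z ≠ 0) (hzeros : ∀ z, F (t z) = 0 ↔ G z = 0) :
    ∃ s : ℂ → ℂ, Continuous s ∧ (∀ z, s z ≠ 0) ∧ ∀ z, s z ^ 2 * G z = F (t z) := by
  obtain ⟨q, hq, hqG, hq_zero⟩ := exists_continuous_mul_eq (hF.comp ht) hG hGsimple
    fun z => (hzeros z).mpr
  have hq0 : ∀ z, q z ≠ 0 := by
    intro z
    by_cases hz : G z = 0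
    · have hFt := (hzeros z).mpr hz
      rw [hq_zero z hz, deriv_comp z (hF (t z)) (ht z)]
      exact div_ne_zero (mul_ne_zero (hFsimple _ hFt) (ht' z)) (hGsimple z hz)
    · exact left_ne_zero_of_mul (by rw [hqG z]; exact mt (hzeros z).mp hz)
  obtain ⟨s, hs, hsq⟩ := exists_continuous_pow_eq hq hq0 two_ne_zero
  exact ⟨s, hs, fun z hs0 => hq0 z (by rw [← hsq, hs0, zero_pow two_ne_zero]),
    fun z => by rw [hsq, hqG]; rfl⟩

end Complex

theorem Differentiable.isOpenMap_of_injective {t : ℂ → ℂ} (ht : Differentiable ℂ t)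
    (hinj : Injective t) : IsOpenMap t :=
  (Complex.analyticOnNhd_univ_iff_differentiable.mpr ht).is_constant_or_isOpenMap.resolve_left
    fun ⟨_, hw⟩ => zero_ne_one (hinj ((hw 0).trans (hw 1).symm))

theorem Homeomorph.deriv_ne_zero {e : ℂ ≃ₜ ℂ} (he : Differentiable ℂ e) (z₀ : ℂ) :
    deriv e z₀ ≠ 0 := by
  -- Critical points of `e` are isolated, so `e.symm` is differentiable on a punctured
  -- neighbourhood of `e z₀`, hence at `e z₀` by continuity; the chain rule for
  -- `e.symm ∘ e = id` then rules out `deriv e z₀ = 0`.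
  intro h0
  have hde : AnalyticOnNhd ℂ (deriv e) univ :=
    (Complex.analyticOnNhd_univ_iff_differentiable.mpr he).deriv
  have hcrit : ∀ᶠ z in 𝓝[≠] z₀, deriv e z ≠ 0 := by
    refine ((hde z₀ (mem_univ _)).eventually_eq_zero_or_eventually_ne_zero).resolve_left
      fun hzero => ?_
    have hconst : ∀ z, deriv e z = 0 := fun z =>
      hde.eqOn_zero_of_preconnected_of_eventuallyEq_zero isPreconnected_univ (mem_univ z₀)
        hzero (mem_univ z)
    exact zero_ne_one (e.injective (is_const_of_deriv_eq_zero he hconst 0 1))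
  have hsymm : ∀ᶠ w in 𝓝[≠] e z₀, DifferentiableAt ℂ e.symm w := by
    rw [← e.map_punctured_nhds_eq, eventually_map]
    filter_upwards [hcrit] with z hz
    rw [← e.symm_apply_apply z] at hz
    exact (HasDerivAt.of_local_left_inverse e.symm.continuous.continuousAt (he _).hasDerivAt hz
      (.of_forall e.apply_symm_apply)).differentiableAt
  have hτ : DifferentiableAt ℂ e.symm (e z₀) :=
    (Complex.analyticAt_of_differentiable_on_punctured_nhds_of_continuousAt hsymm
      e.symm.continuous.continuousAt).differentiableAt
  have hchain := hτ.hasDerivAt.comp z₀ (he z₀).hasDerivAt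
  rw [e.symm_comp_self, h0, mul_zero] at hchain
  exact zero_ne_one (hchain.unique (hasDerivAt_id z₀))

namespace HypFiberProd

variable {f g f' g' : ℂ → ℂ} {s₁ s₂ : ℂ → ℂ}

noncomputable def homeomorphOfSqMul (e : ℂ ≃ₜ ℂ) (hs₁ : Continuous s₁) (hs₂ : Continuous s₂)
    (hs₁0 : ∀ z, s₁ z ≠ 0) (hs₂0 : ∀ z, s₂ z ≠ 0) (hf : ∀ z, s₁ z ^ 2 * f z = f' (e z))
    (hg : ∀ z, s₂ z ^ 2 * g z = g' (e z)) : HypFiberProd f g ≃ₜ HypFiberProd f' g' where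
  toFun u := ⟨(e u.1.1, s₁ u.1.1 * u.1.2.1, s₂ u.1.1 * u.1.2.2), by
    rw [mul_pow, mul_pow, u.2.1, u.2.2, hf, hg]; exact ⟨rfl, rfl⟩⟩
  invFun v := ⟨(e.symm v.1.1, v.1.2.1 / s₁ (e.symm v.1.1), v.1.2.2 / s₂ (e.symm v.1.1)), by
    have hf := hf (e.symm v.1.1)
    have hg := hg (e.symm v.1.1)
    rw [e.apply_symm_apply] at hf hg
    rw [div_pow, div_pow, v.2.1, v.2.2, ← hf, ← hg,
      mul_div_cancel_left₀ _ (pow_ne_zero 2 (hs₁0 _)),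
      mul_div_cancel_left₀ _ (pow_ne_zero 2 (hs₂0 _))]
    exact ⟨rfl, rfl⟩⟩
  left_inv u := by
    ext <;> simp [mul_div_cancel_left₀, hs₁0, hs₂0]
  right_inv v := by
    ext <;> simp [mul_div_cancel₀, hs₁0, hs₂0]
  continuous_toFun := by fun_prop
  continuous_invFun := by fun_prop (disch := simp [hs₁0, hs₂0])

theorem image_homeomorphOfSqMul_zeros (e : ℂ ≃ₜ ℂ) (hs₁ : Continuous s₁) (hs₂ : Continuous s₂)
    (hs₁0 : ∀ z, s₁ z ≠ 0) (hs₂0 : ∀ z, s₂ z ≠ 0) (hf : ∀ z, s₁ z ^ 2 * f z = f' (e z))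
    (hg : ∀ z, s₂ z ^ 2 * g z = g' (e z)) :
    homeomorphOfSqMul e hs₁ hs₂ hs₁0 hs₂0 hf hg '' {u | g u.1.1 = 0} = {v | g' v.1.1 = 0} := by
  rw [Homeomorph.image_eq_preimage_symm]
  ext v
  have hg := hg (e.symm v.1.1)
  rw [e.apply_symm_apply] at hg
  change g (e.symm v.1.1) = 0 ↔ g' v.1.1 = 0
  rw [← hg, mul_eq_zero, or_iff_right (pow_ne_zero 2 (hs₂0 _))]

end HypFiberProd

theorem isomorphic_singular_fiber_products_general
    (f g h : ℂ → ℂ) (hf : Differentiable ℂ f) (hg : Differentiable ℂ g)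
    (hh : Differentiable ℂ h)
    (hfsimple : ∀ z, f z = 0 → deriv f z ≠ 0)
    (hgsimple : ∀ z, g z = 0 → deriv g z ≠ 0)
    (hhsimple : ∀ z, h z = 0 → deriv h z ≠ 0)
    (t : ℂ → ℂ) (ht : Differentiable ℂ t) (htb : Function.Bijective t)
    (htf : t '' (f ⁻¹' {0}) = f ⁻¹' {0})
    (htA : t '' (g ⁻¹' {0}) = h ⁻¹' {0}) :
    ∃ T : HypFiberProd f g ≃ₜ HypFiberProd f h,
      T '' {u : HypFiberProd f g | g (u : ℂ × ℂ × ℂ).1 = 0} =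
        {v : HypFiberProd f h | h (v : ℂ × ℂ × ℂ).1 = 0} := by
  let e : ℂ ≃ₜ ℂ := (Equiv.ofBijective t htb).toHomeomorphOfContinuousOpen ht.continuous
    (ht.isOpenMap_of_injective htb.injective)
  have ht' : ∀ z, deriv t z ≠ 0 := e.deriv_ne_zero ht
  obtain ⟨s₁, hs₁, hs₁0, hs₁f⟩ := Complex.exists_continuous_sq_mul_eq_comp hf hf ht hfsimple
    hfsimple ht' (htb.injective.apply_mem_iff_of_image_eq htf)
  obtain ⟨s₂, hs₂, hs₂0, hs₂g⟩ := Complex.exists_continuous_sq_mul_eq_comp hh hg ht hhsimple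
    hgsimple ht' (htb.injective.apply_mem_iff_of_image_eq htA)
  exact ⟨_, HypFiberProd.image_homeomorphOfSqMul_zeros e hs₁ hs₂ hs₁0 hs₂0 hs₁f hs₂g⟩

/-- 'necessary condition' direction of Theorem 4.5.
Let `f` be entire with infinite zero set and simple zeros, and `g, h` entire with simple
zeros whose zero sets `A = g⁻¹(0)` and `B = h⁻¹(0)` are nonempty subsets of `f⁻¹(0)`, each
either infinite or finite of even cardinality.  If there is a bijective holomorphic map
`t : ℂ → ℂ` with `t(f⁻¹(0)) = f⁻¹(0)` and `t(A) = B`, then there is a homeomorphism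
`T : S(f,g) → S(f,h)` carrying the singular locus onto the singular locus. -/
theorem isomorphic_singular_fiber_products
    (f g h : ℂ → ℂ) (hf : Differentiable ℂ f) (hg : Differentiable ℂ g)
    (hh : Differentiable ℂ h)
    (hfzero : (f ⁻¹' {0}).Infinite)
    (hfsimple : ∀ z, f z = 0 → deriv f z ≠ 0)
    (hgsimple : ∀ z, g z = 0 → deriv g z ≠ 0)
    (hhsimple : ∀ z, h z = 0 → deriv h z ≠ 0)
    (hA : (g ⁻¹' {0}).Nonempty) (hAf : g ⁻¹' {0} ⊆ f ⁻¹' {0})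
    (hB : (h ⁻¹' {0}).Nonempty) (hBf : h ⁻¹' {0} ⊆ f ⁻¹' {0})
    (hAcard : (g ⁻¹' {0}).Infinite ∨
      ((g ⁻¹' {0}).Finite ∧ Even (g ⁻¹' {0}).ncard))
    (hBcard : (h ⁻¹' {0}).Infinite ∨
      ((h ⁻¹' {0}).Finite ∧ Even (h ⁻¹' {0}).ncard))
    (t : ℂ → ℂ) (ht : Differentiable ℂ t) (htb : Function.Bijective t)
    (htf : t '' (f ⁻¹' {0}) = f ⁻¹' {0})
    (htA : t '' (g ⁻¹' {0}) = h ⁻¹' {0}) :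
    ∃ T : HypFiberProd f g ≃ₜ HypFiberProd f h,
      T '' {u : HypFiberProd f g | g (u : ℂ × ℂ × ℂ).1 = 0} =
        {v : HypFiberProd f h | h (v : ℂ × ℂ × ℂ).1 = 0} :=
  isomorphic_singular_fiber_products_general f g h hf hg hh hfsimple hgsimple hhsimple t ht htb htf
    htA
end
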